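/- Comparison of slice norms: let α ∈ (0,1], σ ∈ (0,1), k ∈ ℕ with e_{k−1}(z^α) ≠ 0 on Ω, and 𝐢, 𝐣 ∈ 𝕊². If f : 𝔹 → ℍ is slice regular and its restriction to E belongs to 𝔇^σ_{α,k,𝐢}, then its restriction to E belongs to 𝔇^σ_{α,k,𝐣} and ‖f‖²_{𝔇,𝐣} ≤ 8·‖f‖²_{𝔇,𝐢}. -/

import Mathlib

open MeasureTheory Complex Quaternion

noncomputable section

/-- The unit disk minus the real segment `(-1, 0]`. -/
def Omega : Set ℂ :=
  {z : ℂ | ‖z‖ < 1 ∧ ¬ (z.im = 0 ∧ -1 < z.re ∧ z.re ≤ 0)}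

/-- The truncated exponential `e_k(w) = ∑_{n=0}^k w^n / n!`. -/
def ek (k : ℕ) (w : ℂ) : ℂ := ∑ n ∈ Finset.range (k + 1), w ^ n / (n.factorial : ℂ)

/-- The sphere of unit purely imaginary quaternions. -/
def Sph : Set (Quaternion ℝ) := {i : Quaternion ℝ | i.re = 0 ∧ ‖i‖ = 1}

/-- The real-algebra embedding `φ_𝐢 : ℂ → ℍ`, `x + i y ↦ x + y 𝐢`. -/
def phi (i : Quaternion ℝ) (z : ℂ) : Quaternion ℝ := (z.re : Quaternion ℝ) + z.im • i

/-- The open unit ball of the quaternions. -/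
def ballH : Set (Quaternion ℝ) := {q : Quaternion ℝ | ‖q‖ < 1}

/-- `E = 𝔹 \ (-1, 0]`: the unit ball minus the real segment `(-1, 0]`. -/
def Eset : Set (Quaternion ℝ) :=
  ballH \ {q : Quaternion ℝ | ∃ x : ℝ, -1 < x ∧ x ≤ 0 ∧ q = (x : Quaternion ℝ)}

/-- `f` is slice regular on `S`: real-differentiable and satisfying the
Cauchy–Riemann equation `∂f/∂x + 𝐢 ∂f/∂y = 0` on each slice. -/
def SliceRegularOn (f : Quaternion ℝ → Quaternion ℝ) (S : Set (Quaternion ℝ)) : Prop :=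
  ∀ q ∈ S, DifferentiableAt ℝ f q ∧
    ∀ i ∈ Sph, (∃ x y : ℝ, q = (x : Quaternion ℝ) + y • i) →
      fderiv ℝ f q 1 + i * fderiv ℝ f q i = 0

/-- The Cullen derivative `f' = ∂f/∂x`. -/
def cullen (f : Quaternion ℝ → Quaternion ℝ) (q : Quaternion ℝ) : Quaternion ℝ :=
  fderiv ℝ f q 1

/-- The 𝐢-generalized fractal-fractional derivative of a slice regular function,
read through the slice parametrization: `z ∈ Ω ↦ D^σ_{α,k,𝐢} f (φ_𝐢 z)`. -/
def DfracQ (α σ : ℝ) (k : ℕ) (i : Quaternion ℝ) (f : Quaternion ℝ → Quaternion ℝ)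
    (z : ℂ) : Quaternion ℝ :=
  (1 - σ) • f (phi i z) +
    σ • (phi i (((α : ℂ) * z ^ ((α : ℂ) - 1) * ek (k - 1) (z ^ (α : ℂ)))⁻¹) *
      cullen f (phi i z))

/-- The quaternionic Dirichlet-type norm `‖f‖_{𝔇,𝐢}`. -/
def DnormQ (α σ : ℝ) (k : ℕ) (i : Quaternion ℝ) (f : Quaternion ℝ → Quaternion ℝ) : ℝ :=
  Real.sqrt (α * ‖f ((1 / 2 : ℝ) : Quaternion ℝ)‖ ^ 2 +
    ∫ z in Omega, ‖DfracQ α σ k i f z‖ ^ 2)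

/-- Membership in the quaternionic Dirichlet-type space `𝔇^σ_{α,k,𝐢}`. -/
def MemDQ (α σ : ℝ) (k : ℕ) (i : Quaternion ℝ) (f : Quaternion ℝ → Quaternion ℝ) : Prop :=
  SliceRegularOn f Eset ∧ IntegrableOn (fun z => ‖DfracQ α σ k i f z‖ ^ 2) Omega

namespace SliceAux
variable {i j : Quaternion ℝ}

lemma coe_eq_smul_one (x : ℝ) : (x : Quaternion ℝ) = x • (1 : Quaternion ℝ) := by
  rw [← Quaternion.coe_one, Quaternion.smul_coe, mul_one]

lemma Sph.mul_self (hi : i ∈ Sph) : i * i = -1 := by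
  have h1 : star i = -i := Quaternion.star_eq_neg.2 hi.1
  have h2 : i * star i = ((Quaternion.normSq i : ℝ) : Quaternion ℝ) := Quaternion.self_mul_star i
  have h3 : Quaternion.normSq i = 1 := by
    rw [Quaternion.normSq_eq_norm_mul_self, hi.2, one_mul]
  rw [h1, h3] at h2
  push_cast at h2
  linear_combination (norm := noncomm_ring) -h2

lemma phi_real (x : ℝ) : phi i ((x : ℂ)) = (x : Quaternion ℝ) := by simp [phi]

lemma phi_one : phi i 1 = 1 := by simp [phi]

lemma phi_mul (hi2 : i * i = -1) (z w : ℂ) : phi i (z * w) = phi i z * phi i w := by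
  simp only [phi, Complex.mul_re, Complex.mul_im, coe_eq_smul_one, add_mul, mul_add,
    smul_mul_smul_comm, one_mul, mul_one, hi2, smul_neg]
  module

lemma phi_add (z w : ℂ) : phi i (z + w) = phi i z + phi i w := by
  simp only [phi, Complex.add_re, Complex.add_im]; push_cast; module

lemma phi_smul (r : ℝ) (z : ℂ) : phi i (r • z) = r • phi i z := by
  simp only [phi, Complex.smul_re, Complex.smul_im, smul_eq_mul, coe_eq_smul_one]; module

lemma normSq_phi (hi : i ∈ Sph) (z : ℂ) : Quaternion.normSq (phi i z) = Complex.normSq z := by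
  have h2 : Quaternion.normSq i = 1 := by
    rw [Quaternion.normSq_eq_norm_mul_self, hi.2, one_mul]
  rw [phi, Quaternion.normSq_add, Quaternion.normSq_coe, Quaternion.normSq_smul, h2]
  have h1 : star (z.im • i) = z.im • star i := star_smul _ _
  rw [Quaternion.star_eq_neg.2 hi.1] at h1
  rw [h1]
  simp [Complex.normSq_apply, hi.1, sq]

lemma norm_phi (hi : i ∈ Sph) (z : ℂ) : ‖phi i z‖ = ‖z‖ := by
  have h := normSq_phi hi z
  rw [Quaternion.normSq_eq_norm_mul_self] at h
  rw [← Real.sqrt_mul_self (norm_nonneg (phi i z)), h, Complex.normSq_eq_norm_sq]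
  exact Real.sqrt_sq (norm_nonneg z)

/-- `phi i` as a ring hom. -/
def phiRingHom (i : Quaternion ℝ) (hi2 : i * i = -1) : ℂ →+* Quaternion ℝ where
  toFun := phi i
  map_one' := phi_one
  map_mul' := phi_mul hi2
  map_zero' := by simp [phi]
  map_add' := phi_add

/-- `phi i` as a continuous linear map. -/
def phiL (i : Quaternion ℝ) : ℂ →L[ℝ] Quaternion ℝ :=
  LinearMap.toContinuousLinearMap
    { toFun := phi i
      map_add' := phi_add
      map_smul' := phi_smul }

@[simp] lemma phiL_apply (z : ℂ) : phiL i z = phi i z := rfl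

/-- The map `w ↦ phi i w * q` as a continuous linear map. -/
def slmap (i q : Quaternion ℝ) : ℂ →L[ℝ] Quaternion ℝ :=
  LinearMap.toContinuousLinearMap
    { toFun := fun w => phi i w * q
      map_add' := fun a b => by simp only [phi_add, add_mul]
      map_smul' := fun r a => by simp only [phi_smul, smul_mul_assoc, RingHom.id_apply] }

@[simp] lemma slmap_apply (q : Quaternion ℝ) (w : ℂ) : slmap i q w = phi i w * q := rfl

/-- Main derivative lemma: slice regularity gives the slice derivative. -/
lemma hasFDerivAt_slice {f : Quaternion ℝ → Quaternion ℝ} (hf : SliceRegularOn f ballH)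
    (hi : i ∈ Sph) {z : ℂ} (hz : ‖z‖ < 1) :
    HasFDerivAt (fun w => f (phi i w)) (slmap i (cullen f (phi i z))) z := by
  have hi2 := Sph.mul_self hi
  have hq : phi i z ∈ ballH := by rw [ballH, Set.mem_setOf_eq, norm_phi hi]; exact hz
  obtain ⟨hd, hcr⟩ := hf _ hq
  have hCR := hcr i hi ⟨z.re, z.im, rfl⟩
  have hX : fderiv ℝ f (phi i z) i = i * fderiv ℝ f (phi i z) 1 := by
    have := congrArg (fun q => i * q) hCR
    simp only [mul_add, mul_zero] at this
    rw [← mul_assoc, hi2] at this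
    linear_combination (norm := noncomm_ring) -this
  have hcomp : HasFDerivAt (fun w => f (phi i w)) ((fderiv ℝ f (phi i z)).comp (phiL i)) z :=
    (hd.hasFDerivAt.comp z (phiL i).hasFDerivAt)
  have heq : (fderiv ℝ f (phi i z)).comp (phiL i) = slmap i (cullen f (phi i z)) := by
    apply ContinuousLinearMap.ext
    intro w
    simp only [ContinuousLinearMap.coe_comp', Function.comp_apply, phiL_apply, slmap_apply]
    have hw : phi i w = w.re • (1 : Quaternion ℝ) + w.im • i := by rw [phi, coe_eq_smul_one]
    rw [hw, map_add, ContinuousLinearMap.map_smul, ContinuousLinearMap.map_smul, hX,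
      add_mul, smul_mul_assoc, smul_mul_assoc, one_mul]
    rfl
  rwa [heq] at hcomp


/-- Quaternion algebra identity: `j (1 - ji) = (1 - ji) i`. -/
lemma key1 (hi2 : i * i = -1) (hj2 : j * j = -1) :
    j * (1 - j * i) = (1 - j * i) * i := by
  have h1 : j * (j * i) = -i := by rw [← mul_assoc, hj2, neg_one_mul]
  have h2 : (j * i) * i = -j := by rw [mul_assoc, hi2, mul_neg_one]
  rw [mul_sub, sub_mul, mul_one, one_mul, h1, h2, sub_neg_eq_add, sub_neg_eq_add, add_comm]

/-- Quaternion algebra identity: `j (1 + ji) = -((1 + ji) i)`. -/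
lemma key2 (hi2 : i * i = -1) (hj2 : j * j = -1) :
    j * (1 + j * i) = -((1 + j * i) * i) := by
  have h1 : j * (j * i) = -i := by rw [← mul_assoc, hj2, neg_one_mul]
  have h2 : (j * i) * i = -j := by rw [mul_assoc, hi2, mul_neg_one]
  rw [mul_add, add_mul, mul_one, one_mul, h1, h2, neg_add, neg_neg, add_comm]

lemma phi_comm₁ (hi2 : i * i = -1) (hj2 : j * j = -1) (w : ℂ) :
    phi j w * ((2⁻¹ : ℝ) • (1 - j * i)) = ((2⁻¹ : ℝ) • (1 - j * i)) * phi i w := by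
  rw [phi, phi, add_mul, mul_add, Quaternion.coe_mul_eq_smul, Quaternion.mul_coe_eq_smul,
    smul_mul_assoc, mul_smul_comm]
  congr 1
  simp only [smul_mul_assoc, mul_smul_comm]
  rw [key1 hi2 hj2]

lemma phi_comm₂ (hi2 : i * i = -1) (hj2 : j * j = -1) (w : ℂ) :
    phi j w * ((2⁻¹ : ℝ) • (1 + j * i)) =
      ((2⁻¹ : ℝ) • (1 + j * i)) * phi i ((starRingEnd ℂ) w) := by
  rw [phi, phi, add_mul, mul_add, Quaternion.coe_mul_eq_smul, Quaternion.mul_coe_eq_smul,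
    Complex.conj_re, Complex.conj_im]
  congr 1
  simp only [smul_mul_assoc, mul_smul_comm, neg_smul, mul_neg, smul_neg]
  rw [key2 hi2 hj2]
  simp only [smul_neg]
  module

lemma half_add_half (hi2 : i * i = -1) (hj2 : j * j = -1) :
    ((2⁻¹ : ℝ) • (1 - j * i)) + ((2⁻¹ : ℝ) • (1 + j * i)) = 1 := by
  rw [← smul_add]
  have : (1 - j * i) + (1 + j * i) = (2 : ℝ) • (1 : Quaternion ℝ) := by
    module
  rw [this, smul_smul]
  norm_num


variable {f : Quaternion ℝ → Quaternion ℝ}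

lemma mem_ball_iff_abs (z : ℂ) : z ∈ Metric.ball (0 : ℂ) 1 ↔ ‖z‖ < 1 := by
  simp [Metric.mem_ball, Complex.dist_eq]

/-- Representation formula for slice regular functions, together with its
Cullen-derivative version. -/
lemma slice_repr (hf : SliceRegularOn f ballH) (hi : i ∈ Sph) (hj : j ∈ Sph) :
    ∀ z : ℂ, ‖z‖ < 1 →
      f (phi j z) = ((2⁻¹ : ℝ) • (1 - j * i)) * f (phi i z)
          + ((2⁻¹ : ℝ) • (1 + j * i)) * f (phi i ((starRingEnd ℂ) z)) ∧
      cullen f (phi j z) = ((2⁻¹ : ℝ) • (1 - j * i)) * cullen f (phi i z)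
          + ((2⁻¹ : ℝ) • (1 + j * i)) * cullen f (phi i ((starRingEnd ℂ) z)) := by
  have hi2 := Sph.mul_self hi
  have hj2 := Sph.mul_self hj
  letI : Module ℂ (Quaternion ℝ) := Module.compHom (Quaternion ℝ) (phiRingHom j hj2)
  haveI : IsScalarTower ℝ ℂ (Quaternion ℝ) := ⟨fun r c q => by
      show phi j (r • c) * q = r • (phi j c * q)
      rw [phi_smul, smul_mul_assoc]⟩
  letI : NormedSpace ℂ (Quaternion ℝ) :=
    { toModule := inferInstance
      norm_smul_le := fun c q => by
        show ‖phi j c * q‖ ≤ ‖c‖ * ‖q‖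
        rw [norm_mul, norm_phi hj] }
  set c₁ : Quaternion ℝ := (2⁻¹ : ℝ) • (1 - j * i) with hc₁
  set c₂ : Quaternion ℝ := (2⁻¹ : ℝ) • (1 + j * i) with hc₂
  set B := Metric.ball (0 : ℂ) 1 with hB
  set Fj : ℂ → Quaternion ℝ := fun z => f (phi j z) with hFj
  set G : ℂ → Quaternion ℝ :=
    fun z => c₁ * f (phi i z) + c₂ * f (phi i ((starRingEnd ℂ) z)) with hG
  have hFjd : ∀ z ∈ B, HasFDerivAt Fj (slmap j (cullen f (phi j z))) z := fun z hz =>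
    hasFDerivAt_slice hf hj ((mem_ball_iff_abs z).1 hz)
  have hGd : ∀ z ∈ B, HasFDerivAt G
      (slmap j (c₁ * cullen f (phi i z) + c₂ * cullen f (phi i ((starRingEnd ℂ) z)))) z := by
    intro z hz
    have hz1 : ‖z‖ < 1 := (mem_ball_iff_abs z).1 hz
    have hz2 : ‖(starRingEnd ℂ) z‖ < 1 := by rwa [Complex.norm_conj]
    have h1 := hasFDerivAt_slice hf hi hz1
    have h2 := hasFDerivAt_slice hf hi hz2
    have h3 : HasFDerivAt (fun w => f (phi i ((starRingEnd ℂ) w)))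
        ((slmap i (cullen f (phi i ((starRingEnd ℂ) z)))).comp
          (Complex.conjCLE : ℂ ≃L[ℝ] ℂ).toContinuousLinearMap) z := by
      exact h2.comp z Complex.conjCLE.hasFDerivAt
    have h4 := (h1.const_mul c₁).add (h3.const_mul c₂)
    have heq : c₁ • slmap i (cullen f (phi i z)) +
        c₂ • ((slmap i (cullen f (phi i ((starRingEnd ℂ) z)))).comp
          (Complex.conjCLE : ℂ ≃L[ℝ] ℂ).toContinuousLinearMap) =
        slmap j (c₁ * cullen f (phi i z) + c₂ * cullen f (phi i ((starRingEnd ℂ) z))) := by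
      apply ContinuousLinearMap.ext
      intro w
      simp only [ContinuousLinearMap.add_apply, ContinuousLinearMap.smul_apply,
        ContinuousLinearMap.coe_comp', Function.comp_apply, slmap_apply,
        ContinuousLinearEquiv.coe_coe, Complex.conjCLE_apply]
      rw [mul_add, ← mul_assoc, ← mul_assoc, phi_comm₁ hi2 hj2, phi_comm₂ hi2 hj2,
        mul_assoc, mul_assoc]
      rfl
    rwa [heq] at h4
  have hCdiff : ∀ (q : Quaternion ℝ) (F : ℂ → Quaternion ℝ) (z : ℂ),
      HasFDerivAt F (slmap j q) z → HasFDerivAt F ((ContinuousLinearMap.id ℂ ℂ).smulRight q) z := by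
    intro q F z h
    apply hasFDerivAt_of_restrictScalars ℝ h
    apply ContinuousLinearMap.ext
    intro w
    show (w : ℂ) • q = phi j w * q
    rfl
  have hFjC : DifferentiableOn ℂ Fj B := fun z hz =>
    ((hCdiff _ _ z (hFjd z hz)).differentiableAt).differentiableWithinAt
  have hGC : DifferentiableOn ℂ G B := fun z hz =>
    ((hCdiff _ _ z (hGd z hz)).differentiableAt).differentiableWithinAt
  have hFjA : AnalyticOnNhd ℂ Fj B := hFjC.analyticOnNhd Metric.isOpen_ball
  have hGA : AnalyticOnNhd ℂ G B := hGC.analyticOnNhd Metric.isOpen_ball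
  have h0 : (0 : ℂ) ∈ B := by simp [hB]
  have hreal : ∀ x : ℝ, Fj ((x : ℂ)) = G ((x : ℂ)) := by
    intro x
    show f (phi j (x : ℂ)) = c₁ * f (phi i (x : ℂ)) + c₂ * f (phi i ((starRingEnd ℂ) (x : ℂ)))
    rw [Complex.conj_ofReal, phi_real, phi_real, ← add_mul, half_add_half hi2 hj2, one_mul]
  have hfreq : ∃ᶠ z in nhdsWithin 0 {(0 : ℂ)}ᶜ, Fj z = G z := by
    have ht0 : Filter.Tendsto (fun n : ℕ => (((n : ℝ) + 1)⁻¹ : ℝ)) Filter.atTop (nhds 0) := by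
      exact tendsto_one_div_add_atTop_nhds_zero_nat.congr (fun n => one_div _)
    have ht : Filter.Tendsto (fun n : ℕ => ((((n : ℝ) + 1)⁻¹ : ℝ) : ℂ)) Filter.atTop
        (nhdsWithin 0 {(0 : ℂ)}ᶜ) := by
      apply tendsto_nhdsWithin_of_tendsto_nhds_of_eventually_within
      · have h := (Complex.continuous_ofReal.tendsto (0 : ℝ)).comp ht0
        rw [Complex.ofReal_zero] at h
        exact h
      · apply Filter.Eventually.of_forall
        intro n
        simp only [Set.mem_compl_iff, Set.mem_singleton_iff]
        intro h
        rw [Complex.ofReal_eq_zero] at h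
        have hpos : (0 : ℝ) < ((n : ℝ) + 1)⁻¹ := by positivity
        rw [h] at hpos
        exact lt_irrefl _ hpos
    exact ht.frequently (Filter.Frequently.of_forall fun n => hreal _)
  have hEq : Set.EqOn Fj G B :=
    hFjA.eqOn_of_preconnected_of_frequently_eq hGA
      ((convex_ball (0 : ℂ) 1).isPreconnected) h0 hfreq
  intro z hz1
  have hz : z ∈ B := (mem_ball_iff_abs z).2 hz1
  refine ⟨hEq hz, ?_⟩
  have hfd : fderiv ℝ Fj z = fderiv ℝ G z :=
    Filter.EventuallyEq.fderiv_eq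
      (Filter.eventuallyEq_of_mem (Metric.isOpen_ball.mem_nhds hz) hEq)
  have hF := (hFjd z hz).fderiv
  have hG' := (hGd z hz).fderiv
  rw [hF, hG'] at hfd
  have happ := congrArg (fun (L : ℂ →L[ℝ] Quaternion ℝ) => L 1) hfd
  simpa only [slmap_apply, phi_one, one_mul] using happ

/-- Continuity of the Cullen derivative along a slice. -/
lemma cullen_slice_continuousOn (hf : SliceRegularOn f ballH) (hi : i ∈ Sph) :
    ContinuousOn (fun z => cullen f (phi i z)) (Metric.ball (0 : ℂ) 1) := by
  have hi2 := Sph.mul_self hi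
  letI : Module ℂ (Quaternion ℝ) := Module.compHom (Quaternion ℝ) (phiRingHom i hi2)
  haveI : IsScalarTower ℝ ℂ (Quaternion ℝ) := ⟨fun r c q => by
      show phi i (r • c) * q = r • (phi i c * q)
      rw [phi_smul, smul_mul_assoc]⟩
  letI : NormedSpace ℂ (Quaternion ℝ) :=
    { toModule := inferInstance
      norm_smul_le := fun c q => by
        show ‖phi i c * q‖ ≤ ‖c‖ * ‖q‖
        rw [norm_mul, norm_phi hi] }
  set B := Metric.ball (0 : ℂ) 1 with hB
  set F : ℂ → Quaternion ℝ := fun z => f (phi i z) with hFdef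
  have hCd : ∀ z ∈ B, HasFDerivAt F
      ((ContinuousLinearMap.id ℂ ℂ).smulRight (cullen f (phi i z))) z := by
    intro z hz
    have h := hasFDerivAt_slice hf hi ((mem_ball_iff_abs z).1 hz)
    apply hasFDerivAt_of_restrictScalars ℝ h
    apply ContinuousLinearMap.ext
    intro w
    show (w : ℂ) • (cullen f (phi i z)) = phi i w * (cullen f (phi i z))
    rfl
  have hFC : DifferentiableOn ℂ F B := fun z hz =>
    ((hCd z hz).differentiableAt).differentiableWithinAt
  have hFA : AnalyticOnNhd ℂ F B := hFC.analyticOnNhd Metric.isOpen_ball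
  have hdA : AnalyticOnNhd ℂ (deriv F) B := hFA.deriv
  apply (hdA.continuousOn).congr
  intro z hz
  have h1 := ((hCd z hz).hasDerivAt).deriv
  rw [h1]
  show cullen f (phi i z) = (1 : ℂ) • cullen f (phi i z)
  rw [one_smul]



lemma omega_abs_lt {z : ℂ} (hz : z ∈ Omega) : ‖z‖ < 1 := hz.1

lemma omega_ne_zero {z : ℂ} (hz : z ∈ Omega) : z ≠ 0 := by
  rintro rfl
  exact hz.2 ⟨by simp, by norm_num, by simp⟩

lemma omega_pos_re {z : ℂ} (hz : z ∈ Omega) (him : z.im = 0) : 0 < z.re := by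
  by_contra h
  push_neg at h
  refine hz.2 ⟨him, ?_, h⟩
  have h1 : |z.re| ≤ ‖z‖ := Complex.abs_re_le_norm z
  have h2 := hz.1
  have := abs_lt.1 (lt_of_le_of_lt h1 h2)
  exact this.1

lemma omega_arg {z : ℂ} (hz : z ∈ Omega) : z.arg ≠ Real.pi := by
  intro h
  rw [Complex.arg_eq_pi_iff] at h
  exact absurd (omega_pos_re hz h.2) (not_lt.2 h.1.le)

lemma omega_conj {z : ℂ} (hz : z ∈ Omega) : (starRingEnd ℂ) z ∈ Omega := by
  refine ⟨by rw [Complex.norm_conj]; exact hz.1, ?_⟩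
  rintro ⟨h1, h2, h3⟩
  rw [Complex.conj_im, neg_eq_zero] at h1
  rw [Complex.conj_re] at h2 h3
  exact hz.2 ⟨h1, h2, h3⟩

lemma conj_preimage_omega : (fun z : ℂ => (starRingEnd ℂ) z) ⁻¹' Omega = Omega := by
  ext z
  constructor
  · intro hz
    have := omega_conj hz
    rwa [Complex.conj_conj] at this
  · exact fun hz => omega_conj hz

lemma measurableSet_omega : MeasurableSet Omega := by
  have h1 : MeasurableSet {z : ℂ | ‖z‖ < 1} :=
    (isOpen_lt continuous_norm continuous_const).measurableSet
  have h2 : MeasurableSet {z : ℂ | z.im = 0 ∧ -1 < z.re ∧ z.re ≤ 0} := by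
    have ha : MeasurableSet {z : ℂ | z.im = 0} :=
      Complex.measurable_im (measurableSet_singleton 0)
    have hb : MeasurableSet {z : ℂ | -1 < z.re} :=
      Complex.measurable_re measurableSet_Ioi
    have hc : MeasurableSet {z : ℂ | z.re ≤ 0} :=
      Complex.measurable_re measurableSet_Iic
    exact ha.inter (hb.inter hc)
  exact h1.inter h2.compl

lemma ek_conj (m : ℕ) (w : ℂ) : (starRingEnd ℂ) (ek m w) = ek m ((starRingEnd ℂ) w) := by
  simp [ek, map_sum, map_div₀, map_pow, map_natCast]

lemma cpow_real_conj {z : ℂ} (hz : z.arg ≠ Real.pi) {r : ℂ} (hr : (starRingEnd ℂ) r = r) :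
    (starRingEnd ℂ) (z ^ r) = ((starRingEnd ℂ) z) ^ r := by
  have h := Complex.conj_cpow z r hz
  rw [hr] at h
  exact h.symm

lemma coef_conj {α : ℝ} {k : ℕ} {z : ℂ} (hz : z.arg ≠ Real.pi) :
    (starRingEnd ℂ) (((α : ℂ) * z ^ ((α : ℂ) - 1) * ek (k - 1) (z ^ (α : ℂ)))⁻¹) =
      ((α : ℂ) * ((starRingEnd ℂ) z) ^ ((α : ℂ) - 1) *
        ek (k - 1) (((starRingEnd ℂ) z) ^ (α : ℂ)))⁻¹ := by
  have hr1 : (starRingEnd ℂ) ((α : ℂ) - 1) = (α : ℂ) - 1 := by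
    rw [map_sub, Complex.conj_ofReal, map_one]
  have hr2 : (starRingEnd ℂ) ((α : ℂ)) = (α : ℂ) := Complex.conj_ofReal α
  rw [map_inv₀, map_mul, map_mul, Complex.conj_ofReal, cpow_real_conj hz hr1,
    ek_conj, cpow_real_conj hz hr2]

/-- Representation formula at the level of the fractal-fractional derivative. -/
lemma Dfrac_repr {α σ : ℝ} {k : ℕ} {f : Quaternion ℝ → Quaternion ℝ}
    (hf : SliceRegularOn f ballH) (hi : i ∈ Sph) (hj : j ∈ Sph) {z : ℂ} (hz : z ∈ Omega) :
    DfracQ α σ k j f z = ((2⁻¹ : ℝ) • (1 - j * i)) * DfracQ α σ k i f z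
      + ((2⁻¹ : ℝ) • (1 + j * i)) * DfracQ α σ k i f ((starRingEnd ℂ) z) := by
  have hi2 := Sph.mul_self hi
  have hj2 := Sph.mul_self hj
  obtain ⟨h1, h2⟩ := slice_repr hf hi hj z hz.1
  set c₁ : Quaternion ℝ := (2⁻¹ : ℝ) • (1 - j * i) with hc₁
  set c₂ : Quaternion ℝ := (2⁻¹ : ℝ) • (1 + j * i) with hc₂
  set cz : ℂ := ((α : ℂ) * z ^ ((α : ℂ) - 1) * ek (k - 1) (z ^ (α : ℂ)))⁻¹ with hcz
  have hczc : (starRingEnd ℂ) cz =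
      ((α : ℂ) * ((starRingEnd ℂ) z) ^ ((α : ℂ) - 1) *
        ek (k - 1) (((starRingEnd ℂ) z) ^ (α : ℂ)))⁻¹ := coef_conj (omega_arg hz)
  show (1 - σ) • f (phi j z) + σ • (phi j cz * cullen f (phi j z)) = _
  rw [h1, h2]
  have E1 : (1 - σ) • (c₁ * f (phi i z) + c₂ * f (phi i ((starRingEnd ℂ) z))) =
      c₁ * ((1 - σ) • f (phi i z)) + c₂ * ((1 - σ) • f (phi i ((starRingEnd ℂ) z))) := by
    rw [smul_add, mul_smul_comm, mul_smul_comm]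
  have E2 : σ • (phi j cz * (c₁ * cullen f (phi i z) + c₂ * cullen f (phi i ((starRingEnd ℂ) z)))) =
      c₁ * (σ • (phi i cz * cullen f (phi i z))) +
      c₂ * (σ • (phi i ((starRingEnd ℂ) cz) * cullen f (phi i ((starRingEnd ℂ) z)))) := by
    rw [mul_add, ← mul_assoc, ← mul_assoc, phi_comm₁ hi2 hj2, phi_comm₂ hi2 hj2,
      mul_assoc, mul_assoc, smul_add, mul_smul_comm, mul_smul_comm]
  rw [E1, E2, hczc]
  show _ = c₁ * ((1 - σ) • f (phi i z) + σ • (phi i cz * cullen f (phi i z))) +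
      c₂ * ((1 - σ) • f (phi i ((starRingEnd ℂ) z)) +
        σ • (phi i (((α : ℂ) * ((starRingEnd ℂ) z) ^ ((α : ℂ) - 1) *
          ek (k - 1) (((starRingEnd ℂ) z) ^ (α : ℂ)))⁻¹) *
            cullen f (phi i ((starRingEnd ℂ) z))))
  rw [mul_add, mul_add]
  abel

lemma norm_chalf₁ (hi : i ∈ Sph) (hj : j ∈ Sph) : ‖(2⁻¹ : ℝ) • (1 - j * i)‖ ≤ 1 := by
  rw [norm_smul]
  have h1 : ‖1 - j * i‖ ≤ 2 := by
    calc ‖1 - j * i‖ ≤ ‖(1 : Quaternion ℝ)‖ + ‖j * i‖ := norm_sub_le _ _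
    _ = 2 := by rw [norm_one, norm_mul, hi.2, hj.2]; norm_num
  have : ‖(2⁻¹ : ℝ)‖ = 2⁻¹ := by rw [Real.norm_eq_abs, abs_of_pos]; norm_num
  rw [this]
  linarith

lemma norm_chalf₂ (hi : i ∈ Sph) (hj : j ∈ Sph) : ‖(2⁻¹ : ℝ) • (1 + j * i)‖ ≤ 1 := by
  rw [norm_smul]
  have h1 : ‖1 + j * i‖ ≤ 2 := by
    calc ‖1 + j * i‖ ≤ ‖(1 : Quaternion ℝ)‖ + ‖j * i‖ := norm_add_le _ _
    _ = 2 := by rw [norm_one, norm_mul, hi.2, hj.2]; norm_num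
  have : ‖(2⁻¹ : ℝ)‖ = 2⁻¹ := by rw [Real.norm_eq_abs, abs_of_pos]; norm_num
  rw [this]
  linarith

/-- Pointwise comparison of the squared norms. -/
lemma Dfrac_sq_bound {α σ : ℝ} {k : ℕ} {f : Quaternion ℝ → Quaternion ℝ}
    (hf : SliceRegularOn f ballH) (hi : i ∈ Sph) (hj : j ∈ Sph) {z : ℂ} (hz : z ∈ Omega) :
    ‖DfracQ α σ k j f z‖ ^ 2 ≤
      2 * ‖DfracQ α σ k i f z‖ ^ 2 + 2 * ‖DfracQ α σ k i f ((starRingEnd ℂ) z)‖ ^ 2 := by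
  have h := Dfrac_repr hf hi hj hz (α := α) (σ := σ) (k := k)
  have hb : ‖DfracQ α σ k j f z‖ ≤
      ‖DfracQ α σ k i f z‖ + ‖DfracQ α σ k i f ((starRingEnd ℂ) z)‖ := by
    rw [h]
    calc ‖_ + _‖ ≤ ‖((2⁻¹ : ℝ) • (1 - j * i)) * DfracQ α σ k i f z‖ +
        ‖((2⁻¹ : ℝ) • (1 + j * i)) * DfracQ α σ k i f ((starRingEnd ℂ) z)‖ := norm_add_le _ _
    _ ≤ ‖DfracQ α σ k i f z‖ + ‖DfracQ α σ k i f ((starRingEnd ℂ) z)‖ := by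
        rw [norm_mul, norm_mul]
        have b1 := norm_chalf₁ hi hj
        have b2 := norm_chalf₂ hi hj
        have n1 : (0:ℝ) ≤ ‖DfracQ α σ k i f z‖ := norm_nonneg _
        have n2 : (0:ℝ) ≤ ‖DfracQ α σ k i f ((starRingEnd ℂ) z)‖ := norm_nonneg _
        have m1 := mul_le_mul_of_nonneg_right b1 n1
        have m2 := mul_le_mul_of_nonneg_right b2 n2
        rw [one_mul] at m1 m2
        linarith
  have h2 : ‖DfracQ α σ k j f z‖ ^ 2 ≤
      (‖DfracQ α σ k i f z‖ + ‖DfracQ α σ k i f ((starRingEnd ℂ) z)‖) ^ 2 :=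
    pow_le_pow_left₀ (norm_nonneg _) hb 2
  nlinarith [sq_nonneg (‖DfracQ α σ k i f z‖ - ‖DfracQ α σ k i f ((starRingEnd ℂ) z)‖)]

/-- Continuity of `DfracQ` on `Omega`. -/
lemma Dfrac_contOn {α σ : ℝ} {k : ℕ} {f : Quaternion ℝ → Quaternion ℝ}
    (hα : 0 < α) (hk : ∀ z ∈ Omega, ek (k - 1) (z ^ (α : ℂ)) ≠ 0)
    (hf : SliceRegularOn f ballH) (hi : i ∈ Sph) :
    ContinuousOn (fun z => DfracQ α σ k i f z) Omega := by
  have hsub : Omega ⊆ Metric.ball (0 : ℂ) 1 := fun z hz => (mem_ball_iff_abs z).2 hz.1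
  have hphi : Continuous (phi i) := (phiL i).continuous
  have hfc : ContinuousOn (fun z => f (phi i z)) Omega := by
    intro z hz
    have hq : phi i z ∈ ballH := by
      rw [ballH, Set.mem_setOf_eq, norm_phi hi]; exact hz.1
    exact (((hf _ hq).1.continuousAt).comp (hphi.continuousAt)).continuousWithinAt
  have hcul : ContinuousOn (fun z => cullen f (phi i z)) Omega :=
    (cullen_slice_continuousOn hf hi).mono hsub
  have hek : Continuous (ek (k - 1)) := by
    apply continuous_finset_sum
    intro n _
    exact (continuous_pow n).div_const _
  have hcpow1 : ContinuousOn (fun z : ℂ => z ^ ((α : ℂ) - 1)) Omega := by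
    intro z hz
    refine (continuousAt_cpow_const ?_).continuousWithinAt
    rw [Complex.mem_slitPlane_iff]
    rcases eq_or_ne z.im 0 with him | him
    · exact Or.inl (omega_pos_re hz him)
    · exact Or.inr him
  have hcpow2 : ContinuousOn (fun z : ℂ => z ^ ((α : ℂ))) Omega := by
    intro z hz
    refine (continuousAt_cpow_const ?_).continuousWithinAt
    rw [Complex.mem_slitPlane_iff]
    rcases eq_or_ne z.im 0 with him | him
    · exact Or.inl (omega_pos_re hz him)
    · exact Or.inr him
  have hg : ContinuousOn
      (fun z : ℂ => (α : ℂ) * z ^ ((α : ℂ) - 1) * ek (k - 1) (z ^ (α : ℂ))) Omega :=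
    (continuousOn_const.mul hcpow1).mul (hek.comp_continuousOn hcpow2)
  have hgne : ∀ z ∈ Omega, (α : ℂ) * z ^ ((α : ℂ) - 1) * ek (k - 1) (z ^ (α : ℂ)) ≠ 0 := by
    intro z hz
    apply mul_ne_zero
    apply mul_ne_zero
    · exact_mod_cast ne_of_gt hα
    · rw [Ne, Complex.cpow_eq_zero_iff]
      rintro ⟨h0, -⟩
      exact omega_ne_zero hz h0
    · exact hk z hz
  have hinv : ContinuousOn
      (fun z : ℂ => ((α : ℂ) * z ^ ((α : ℂ) - 1) * ek (k - 1) (z ^ (α : ℂ)))⁻¹) Omega :=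
    hg.inv₀ hgne
  have hphic : ContinuousOn
      (fun z : ℂ => phi i (((α : ℂ) * z ^ ((α : ℂ) - 1) * ek (k - 1) (z ^ (α : ℂ)))⁻¹)) Omega :=
    hphi.comp_continuousOn hinv
  exact (hfc.const_smul (1 - σ)).add ((hphic.mul hcul).const_smul σ)

lemma conj_measurePreserving :
    MeasurePreserving (fun z : ℂ => (starRingEnd ℂ) z) volume volume :=
  Complex.conjLIE.measurePreserving

lemma conj_measurableEmbedding :
    MeasurableEmbedding (fun z : ℂ => (starRingEnd ℂ) z) := by
  have : Continuous (fun z : ℂ => (starRingEnd ℂ) z) := Complex.continuous_conj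
  exact (Homeomorph.measurableEmbedding
    { toFun := fun z => (starRingEnd ℂ) z
      invFun := fun z => (starRingEnd ℂ) z
      left_inv := Complex.conj_conj
      right_inv := Complex.conj_conj
      continuous_toFun := this
      continuous_invFun := this })

lemma integral_comp_conj (g : ℂ → ℝ) :
    ∫ z in Omega, g ((starRingEnd ℂ) z) = ∫ z in Omega, g z := by
  have h := conj_measurePreserving.setIntegral_preimage_emb conj_measurableEmbedding g Omega
  rwa [conj_preimage_omega] at h

lemma integrableOn_comp_conj {g : ℂ → ℝ} (hg : IntegrableOn g Omega) :
    IntegrableOn (fun z => g ((starRingEnd ℂ) z)) Omega := by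
  have h := MeasurePreserving.integrable_comp_emb (g := g)
    (conj_measurePreserving.restrict_preimage_emb conj_measurableEmbedding Omega)
    conj_measurableEmbedding
  rw [conj_preimage_omega] at h
  exact h.2 hg

end SliceAux

set_option maxHeartbeats 1000000 in
open SliceAux in
theorem comparison_of_slice_norms
    (α σ : ℝ) (hα : α ∈ Set.Ioc (0 : ℝ) 1) (hσ : σ ∈ Set.Ioo (0 : ℝ) 1) (k : ℕ)
    (hk : ∀ z ∈ Omega, ek (k - 1) (z ^ (α : ℂ)) ≠ 0)
    (i j : Quaternion ℝ) (hi : i ∈ Sph) (hj : j ∈ Sph)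
    (f : Quaternion ℝ → Quaternion ℝ) (hf : SliceRegularOn f ballH)
    (hmem : IntegrableOn (fun z => ‖DfracQ α σ k i f z‖ ^ 2) Omega) :
    IntegrableOn (fun z => ‖DfracQ α σ k j f z‖ ^ 2) Omega ∧
      DnormQ α σ k j f ^ 2 ≤ 8 * DnormQ α σ k i f ^ 2 := by
  obtain ⟨hα0, hα1⟩ := hα
  have hconj : IntegrableOn (fun z => ‖DfracQ α σ k i f ((starRingEnd ℂ) z)‖ ^ 2) Omega :=
    integrableOn_comp_conj (g := fun z => ‖DfracQ α σ k i f z‖ ^ 2) hmem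
  have hbound : IntegrableOn (fun z => 2 * ‖DfracQ α σ k i f z‖ ^ 2 +
      2 * ‖DfracQ α σ k i f ((starRingEnd ℂ) z)‖ ^ 2) Omega :=
    (hmem.const_mul 2).add (hconj.const_mul 2)
  have hmeasj : AEStronglyMeasurable (fun z => ‖DfracQ α σ k j f z‖ ^ 2)
      (volume.restrict Omega) := by
    have hc := Dfrac_contOn (σ := σ) hα0 hk hf hj
    exact ((hc.norm).pow 2).aestronglyMeasurable measurableSet_omega
  have hintj : IntegrableOn (fun z => ‖DfracQ α σ k j f z‖ ^ 2) Omega := by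
    apply Integrable.mono' hbound hmeasj
    refine (ae_restrict_iff' measurableSet_omega).2 (Filter.Eventually.of_forall ?_)
    intro z hz
    rw [Real.norm_of_nonneg (by positivity)]
    exact Dfrac_sq_bound hf hi hj hz
  refine ⟨hintj, ?_⟩
  have hIconj : ∫ z in Omega, ‖DfracQ α σ k i f ((starRingEnd ℂ) z)‖ ^ 2 =
      ∫ z in Omega, ‖DfracQ α σ k i f z‖ ^ 2 :=
    integral_comp_conj (fun z => ‖DfracQ α σ k i f z‖ ^ 2)
  have hle : ∫ z in Omega, ‖DfracQ α σ k j f z‖ ^ 2 ≤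
      4 * ∫ z in Omega, ‖DfracQ α σ k i f z‖ ^ 2 := by
    have h1 : ∫ z in Omega, ‖DfracQ α σ k j f z‖ ^ 2 ≤
        ∫ z in Omega, (2 * ‖DfracQ α σ k i f z‖ ^ 2 +
          2 * ‖DfracQ α σ k i f ((starRingEnd ℂ) z)‖ ^ 2) :=
      setIntegral_mono_on hintj hbound measurableSet_omega
        (fun z hz => Dfrac_sq_bound hf hi hj hz)
    rw [integral_add (hmem.const_mul 2) (hconj.const_mul 2), integral_const_mul,
      integral_const_mul, hIconj] at h1
    linarith
  have hIi : 0 ≤ ∫ z in Omega, ‖DfracQ α σ k i f z‖ ^ 2 :=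
    integral_nonneg fun z => by positivity
  have hIj : 0 ≤ ∫ z in Omega, ‖DfracQ α σ k j f z‖ ^ 2 :=
    integral_nonneg fun z => by positivity
  have hT : 0 ≤ α * ‖f ((1 / 2 : ℝ) : Quaternion ℝ)‖ ^ 2 := by positivity
  have e1 : DnormQ α σ k i f ^ 2 = α * ‖f ((1 / 2 : ℝ) : Quaternion ℝ)‖ ^ 2 +
      ∫ z in Omega, ‖DfracQ α σ k i f z‖ ^ 2 := by
    unfold DnormQ
    exact Real.sq_sqrt (by linarith)
  have e2 : DnormQ α σ k j f ^ 2 = α * ‖f ((1 / 2 : ℝ) : Quaternion ℝ)‖ ^ 2 +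
      ∫ z in Omega, ‖DfracQ α σ k j f z‖ ^ 2 := by
    unfold DnormQ
    exact Real.sq_sqrt (by linarith)
  rw [e1, e2]
  linarith
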